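/- arXiv:1707.04124 — 3 statements merged into one kernel-verified Lean document; each statement's English description precedes it below -/
import Mathlib

section
/- For any finite-depth resolution Z with initial state z, the trace distribution TD_Z, which assigns to each trace α ∈ Act* the total probability Pr(C_max(z,α)) of maximal computations from z compatible with α, is a probability distribution over Act*. -/
/-- A finite tree-shaped resolution: each state either halts (`leaf`) or has exactly one
outgoing transition, labelled `a`, to a finitely supported probability distribution over
its `n` children (`prob i` is the probability of the `i`-th child). -/
inductive RTree (Act : Type u) : Type u
  | leaf : RTree Act
  | node (a : Act) (n : ℕ) (child : Fin n → RTree Act) (prob : Fin n → ℝ) : RTree Act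

/-- Well-formedness of a resolution: at every node the children's probabilities are
positive and sum to 1. -/
def RTree.WF {Act : Type*} : RTree Act → Prop
  | .leaf => True
  | .node _ _ child prob => (∀ i, 0 < prob i) ∧ (∑ i, prob i) = 1 ∧ ∀ i, (child i).WF

/-- The maximal computations from the initial state of a resolution, each given by its
trace (sequence of action labels) together with its execution probability (the product of
the probabilities of its steps). -/
def RTree.maxComps {Act : Type*} : RTree Act → List (List Act × ℝ)
  | .leaf => [([], 1)]
  | .node a n child prob =>
      (List.finRange n).flatMap fun i =>
        ((child i).maxComps).map fun c => (a :: c.1, prob i * c.2)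

/-- All computations from the initial state of a resolution (including the empty one and
all prefixes of maximal computations), each given by its trace together with its
execution probability. -/
def RTree.comps {Act : Type*} : RTree Act → List (List Act × ℝ)
  | .leaf => [([], 1)]
  | .node a n child prob =>
      ([], 1) :: ((List.finRange n).flatMap fun i =>
        ((child i).comps).map fun c => (a :: c.1, prob i * c.2))

/-- The trace distribution of a resolution: `TD(α)` is the total probability of the
maximal computations from the initial state that are compatible with the trace `α`. -/
noncomputable def RTree.TD {Act : Type*} [DecidableEq Act] (t : RTree Act)
    (α : List Act) : ℝ :=
  (((t.maxComps).filter fun c => c.1 = α).map Prod.snd).sum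

lemma list_sum_flatMap {β : Type*} (l : List β) (f : β → List ℝ) :
    (l.flatMap f).sum = (l.map fun x => (f x).sum).sum := by
  induction l <;> simp [*]

lemma maxComps_snd_nonneg {Act : Type*} (t : RTree Act) (ht : t.WF) :
    ∀ c ∈ t.maxComps, 0 ≤ c.2 := by
  induction t with
  | leaf => intro c hc; simp [RTree.maxComps] at hc; simp [hc]
  | node a n child prob ih =>
    intro c hc
    simp only [RTree.maxComps, List.mem_flatMap, List.mem_map] at hc
    obtain ⟨i, _, ⟨d, hd, rfl⟩⟩ := hc
    obtain ⟨hp, _, hwf⟩ := ht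
    exact mul_nonneg (hp i).le (ih i (hwf i) d hd)

lemma maxComps_sum_snd {Act : Type*} (t : RTree Act) (ht : t.WF) :
    ((t.maxComps).map Prod.snd).sum = 1 := by
  induction t with
  | leaf => simp [RTree.maxComps]
  | node a n child prob ih =>
    obtain ⟨hp, hs, hwf⟩ := ht
    simp only [RTree.maxComps, List.map_flatMap, List.map_map]
    rw [list_sum_flatMap]
    have : ∀ i : Fin n,
        ((List.map (Prod.snd ∘ fun c : List Act × ℝ => (a :: c.1, prob i * c.2))
          (child i).maxComps).sum) = prob i := by
      intro i
      have : (Prod.snd ∘ fun c : List Act × ℝ => (a :: c.1, prob i * c.2))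
          = fun c : List Act × ℝ => prob i * c.2 := rfl
      rw [this]
      have := ih i (hwf i)
      calc (List.map (fun c : List Act × ℝ => prob i * c.2) (child i).maxComps).sum
          = prob i * ((child i).maxComps.map Prod.snd).sum := by
            rw [List.sum_map_mul_left]
        _ = prob i := by rw [this, mul_one]
    rw [List.map_congr_left (fun i _ => this i)]
    rw [← List.ofFn_eq_map, List.sum_ofFn, hs]

lemma sum_filter_eq {Act : Type*} [DecidableEq Act] (l : List (List Act × ℝ))
    (F : Finset (List Act)) (h : ∀ c ∈ l, c.1 ∈ F) :
    ∑ α ∈ F, ((l.filter fun c => c.1 = α).map Prod.snd).sum = (l.map Prod.snd).sum := by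
  induction l with
  | nil => simp
  | cons x l ih =>
    have hx : x.1 ∈ F := h x (by simp)
    have hl : ∀ c ∈ l, c.1 ∈ F := fun c hc => h c (by simp [hc])
    have : ∀ α, (((x :: l).filter fun c => c.1 = α).map Prod.snd).sum
        = (if x.1 = α then x.2 else 0) + ((l.filter fun c => c.1 = α).map Prod.snd).sum := by
      intro α
      by_cases hxa : x.1 = α <;> simp [List.filter_cons, hxa]
    simp only [this]
    rw [Finset.sum_add_distrib, ih hl, Finset.sum_ite_eq F x.1 (fun _ => x.2)]
    simp [hx]

/-- For any well-formed finite-depth resolution, the trace distribution `TD` is a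
probability distribution over `Act*`: it is nonnegative, finitely supported, and its
total mass is 1. -/
theorem TD_is_probability_distribution {Act : Type*} [DecidableEq Act]
    (t : RTree Act) (ht : t.WF) :
    (∀ α, 0 ≤ t.TD α) ∧
    (Function.support t.TD).Finite ∧
    ∑ᶠ α, t.TD α = 1 := by
  have hnn : ∀ α, 0 ≤ t.TD α := by
    intro α
    apply List.sum_nonneg
    intro x hx
    simp only [List.mem_map, List.mem_filter] at hx
    obtain ⟨c, ⟨hc, _⟩, rfl⟩ := hx
    exact maxComps_snd_nonneg t ht c hc
  set F : Finset (List Act) := (t.maxComps.map Prod.fst).toFinset with hF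
  have hsupp : Function.support t.TD ⊆ ↑F := by
    intro α hα
    simp only [Function.mem_support] at hα
    by_contra hmem
    have : (t.maxComps.filter fun c => c.1 = α) = [] := by
      rw [List.filter_eq_nil_iff]
      intro c hc
      simp only [decide_eq_true_eq]
      intro hc1
      exact hmem (by simp [hF, List.mem_map]; exact ⟨c.2, hc1 ▸ (by simpa using hc)⟩)
    exact hα (by simp [RTree.TD, this])
  refine ⟨hnn, Set.Finite.subset F.finite_toSet hsupp, ?_⟩
  rw [finsum_eq_finset_sum_of_support_subset _ hsupp]
  have := sum_filter_eq t.maxComps F (fun c hc => by simp [hF, List.mem_map]; exact ⟨c.2, by simpa using hc⟩)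
  simpa [RTree.TD, maxComps_sum_snd t ht] using this
end

section
/- For finitely supported probability distributions μ, ν over a set X equipped with an equivalence relation ≈, the Kantorovich lifting of the pseudometric d≈ (d≈(x,y) = 0 if x ≈ y, else 1) satisfies: K(d≈)(μ,ν) = 0 if and only if μ and ν are related by the lifting of ≈ to distributions, i.e., they assign the same total probability to every ≈-equivalence class. -/
open scoped Classical

/-- A finitely supported probability distribution on `X`. -/
structure FinDist (X : Type*) where
  toFun : X → ℝ
  nonneg : ∀ x, 0 ≤ toFun x
  finSupp : (Function.support toFun).Finite
  sum_one : ∑ᶠ x, toFun x = 1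

/-- `ω` is a matching (coupling) for `μ` and `ν`: its left marginal is `μ` and its
right marginal is `ν`. -/
def IsCoupling {X : Type*} (ω : FinDist (X × X)) (μ ν : FinDist X) : Prop :=
  (∀ x, ∑ᶠ y, ω.toFun (x, y) = μ.toFun x) ∧ (∀ y, ∑ᶠ x, ω.toFun (x, y) = ν.toFun y)

/-- The Kantorovich lifting of a distance `d` on `X` to finitely supported
probability distributions on `X`. -/
noncomputable def kantorovich {X : Type*} (d : X → X → ℝ) (μ ν : FinDist X) : ℝ :=
  sInf { r | ∃ ω : FinDist (X × X), IsCoupling ω μ ν ∧ r = ∑ᶠ p, ω.toFun p * d p.1 p.2 }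

section Aux

variable {X : Type*}

private lemma FinDist.mem_nonneg (φ : FinDist X) (s : Set X) :
    0 ≤ ∑ᶠ y ∈ s, φ.toFun y := by
  have hf : (s ∩ Function.support φ.toFun).Finite := φ.finSupp.inter_of_right s
  rw [finsum_mem_eq_sum _ hf]
  exact Finset.sum_nonneg fun i _ => φ.nonneg i

private lemma FinDist.mem_le (φ : FinDist X) (s : Set X) {x : X} (hx : x ∈ s) :
    φ.toFun x ≤ ∑ᶠ y ∈ s, φ.toFun y := by
  have hf : (s ∩ Function.support φ.toFun).Finite := φ.finSupp.inter_of_right s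
  rw [finsum_mem_eq_sum _ hf]
  by_cases h0 : φ.toFun x = 0
  · rw [h0]; exact Finset.sum_nonneg fun i _ => φ.nonneg i
  · exact Finset.single_le_sum (fun i _ => φ.nonneg i)
      (by simp [Set.Finite.mem_toFinset, hx, Function.mem_support, h0])

/-- The class masses differ by at most the cost of any coupling. -/
private lemma coupling_cost_bound {r : X → X → Prop} (hr : Equivalence r)
    {ω : FinDist (X × X)} {μ ν : FinDist X} (hω : IsCoupling ω μ ν) (x0 : X) :
    |(∑ᶠ y ∈ {y | r y x0}, μ.toFun y) - ∑ᶠ y ∈ {y | r y x0}, ν.toFun y| ≤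
      ∑ᶠ p : X × X, ω.toFun p * (if r p.1 p.2 then (0:ℝ) else 1) := by
  set C : Set X := {y | r y x0} with hC
  set F : Finset (X × X) := ω.finSupp.toFinset with hF
  set sx : Finset X := F.image Prod.fst with hsx
  set sy : Finset X := F.image Prod.snd with hsy
  have hmemF : ∀ p : X × X, ω.toFun p ≠ 0 → p ∈ F := fun p hp => by
    simp only [hF, Set.Finite.mem_toFinset, Function.mem_support]; exact hp
  have hμ : ∀ x, μ.toFun x = ∑ y ∈ sy, ω.toFun (x, y) := by
    intro x
    rw [← hω.1 x]
    exact finsum_eq_finset_sum_of_support_subset _ (fun y hy =>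
      Finset.mem_image.2 ⟨(x, y), hmemF _ hy, rfl⟩)
  have hν : ∀ y, ν.toFun y = ∑ x ∈ sx, ω.toFun (x, y) := by
    intro y
    rw [← hω.2 y]
    exact finsum_eq_finset_sum_of_support_subset _ (fun x hx =>
      Finset.mem_image.2 ⟨(x, y), hmemF _ hx, rfl⟩)
  -- membership of support of μ in sx, of ν in sy
  have hsuppμ : ∀ x, μ.toFun x ≠ 0 → x ∈ sx := by
    intro x hx
    rw [hμ x] at hx
    obtain ⟨y, _, hy⟩ := Finset.exists_ne_zero_of_sum_ne_zero hx
    exact Finset.mem_image.2 ⟨(x, y), hmemF _ hy, rfl⟩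
  have hsuppν : ∀ y, ν.toFun y ≠ 0 → y ∈ sy := by
    intro y hy
    rw [hν y] at hy
    obtain ⟨x, _, hx⟩ := Finset.exists_ne_zero_of_sum_ne_zero hy
    exact Finset.mem_image.2 ⟨(x, y), hmemF _ hx, rfl⟩
  -- class masses as finset sums over the product grid
  have hμC : (∑ᶠ y ∈ C, μ.toFun y)
      = ∑ p ∈ (sx ×ˢ sy).filter (fun p => p.1 ∈ C), ω.toFun p := by
    have hf : (C ∩ Function.support μ.toFun).Finite := μ.finSupp.inter_of_right C
    rw [finsum_mem_eq_sum _ hf]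
    have h1 : ∑ x ∈ hf.toFinset, μ.toFun x = ∑ x ∈ sx.filter (fun x => x ∈ C), μ.toFun x := by
      apply Finset.sum_subset
      · intro x hx
        rw [Set.Finite.mem_toFinset] at hx
        exact Finset.mem_filter.2 ⟨hsuppμ x hx.2, hx.1⟩
      · intro x hx hx'
        rw [Set.Finite.mem_toFinset] at hx'
        by_contra h
        exact hx' ⟨(Finset.mem_filter.1 hx).2, h⟩
    rw [h1]
    have h2 : (sx.filter (fun x => x ∈ C)) ×ˢ sy = (sx ×ˢ sy).filter (fun p => p.1 ∈ C) := by
      ext p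
      simp only [Finset.mem_product, Finset.mem_filter]
      tauto
    rw [← h2, Finset.sum_product]
    exact Finset.sum_congr rfl fun x _ => hμ x
  have hνC : (∑ᶠ y ∈ C, ν.toFun y)
      = ∑ p ∈ (sx ×ˢ sy).filter (fun p => p.2 ∈ C), ω.toFun p := by
    have hf : (C ∩ Function.support ν.toFun).Finite := ν.finSupp.inter_of_right C
    rw [finsum_mem_eq_sum _ hf]
    have h1 : ∑ y ∈ hf.toFinset, ν.toFun y = ∑ y ∈ sy.filter (fun y => y ∈ C), ν.toFun y := by
      apply Finset.sum_subset
      · intro y hy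
        rw [Set.Finite.mem_toFinset] at hy
        exact Finset.mem_filter.2 ⟨hsuppν y hy.2, hy.1⟩
      · intro y hy hy'
        rw [Set.Finite.mem_toFinset] at hy'
        by_contra h
        exact hy' ⟨(Finset.mem_filter.1 hy).2, h⟩
    rw [h1]
    have h2 : sx ×ˢ (sy.filter (fun y => y ∈ C)) = (sx ×ˢ sy).filter (fun p => p.2 ∈ C) := by
      ext p
      simp only [Finset.mem_product, Finset.mem_filter]
      tauto
    rw [← h2, Finset.sum_product, Finset.sum_comm]
    exact Finset.sum_congr rfl fun y _ => hν y
  -- cost as a finset sum over the grid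
  have hcost : (∑ᶠ p : X × X, ω.toFun p * (if r p.1 p.2 then (0:ℝ) else 1))
      = ∑ p ∈ sx ×ˢ sy, ω.toFun p * (if r p.1 p.2 then (0:ℝ) else 1) := by
    apply finsum_eq_finset_sum_of_support_subset
    intro p hp
    have hp' : ω.toFun p ≠ 0 := fun h => by
      simp [Function.mem_support, h] at hp
    have hpF := hmemF p hp'
    exact Finset.mem_product.2
      ⟨Finset.mem_image.2 ⟨p, hpF, rfl⟩, Finset.mem_image.2 ⟨p, hpF, rfl⟩⟩
  rw [hμC, hνC, hcost, abs_sub_le_iff]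
  constructor
  · rw [Finset.sum_filter, Finset.sum_filter, ← Finset.sum_sub_distrib]
    apply Finset.sum_le_sum
    intro p _
    have h0 := ω.nonneg p
    split_ifs with ha hb hc hc hb hc hc
    · linarith
    · linarith
    · exact absurd (hr.trans (hr.symm hc) ha) hb
    · linarith
    · linarith
    · linarith
    · linarith
    · linarith
  · rw [Finset.sum_filter, Finset.sum_filter, ← Finset.sum_sub_distrib]
    apply Finset.sum_le_sum
    intro p _
    have h0 := ω.nonneg p
    split_ifs with ha hb hc hc hb hc hc
    · linarith
    · linarith
    · exact absurd (hr.trans hc ha) hb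
    · linarith
    · linarith
    · linarith
    · linarith
    · linarith

/-- The product coupling. -/
private lemma exists_coupling (μ ν : FinDist X) :
    ∃ ω : FinDist (X × X), IsCoupling ω μ ν := by
  have hsupp : Function.support (fun p : X × X => μ.toFun p.1 * ν.toFun p.2) ⊆
      (Function.support μ.toFun) ×ˢ (Function.support ν.toFun) := by
    intro p hp
    rw [Function.mem_support, mul_ne_zero_iff] at hp
    exact ⟨hp.1, hp.2⟩
  have hmarg1 : ∀ x, ∑ᶠ y, μ.toFun x * ν.toFun y = μ.toFun x := by
    intro x
    rw [← mul_finsum _ _, ν.sum_one, mul_one]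
  have hmarg2 : ∀ y, ∑ᶠ x, μ.toFun x * ν.toFun y = ν.toFun y := by
    intro y
    rw [← finsum_mul _ _, μ.sum_one, one_mul]
  refine ⟨⟨fun p => μ.toFun p.1 * ν.toFun p.2,
      fun p => mul_nonneg (μ.nonneg _) (ν.nonneg _),
      Set.Finite.subset (μ.finSupp.prod ν.finSupp) hsupp, ?_⟩, hmarg1, hmarg2⟩
  -- sum to one
  have h1 : Function.support (fun p : X × X => μ.toFun p.1 * ν.toFun p.2) ⊆
      ↑(μ.finSupp.toFinset ×ˢ ν.finSupp.toFinset) := by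
    intro p hp
    have := hsupp hp
    simp only [Finset.coe_product, Set.Finite.coe_toFinset]
    exact this
  rw [finsum_eq_finset_sum_of_support_subset _ h1, Finset.sum_product]
  have : ∀ x, ∑ y ∈ ν.finSupp.toFinset, μ.toFun x * ν.toFun y = μ.toFun x := by
    intro x
    rw [← Finset.mul_sum, ← finsum_eq_sum _ ν.finSupp, ν.sum_one, mul_one]
  rw [Finset.sum_congr rfl fun x _ => this x, ← finsum_eq_sum _ μ.finSupp, μ.sum_one]

/-- When μ and ν agree on every equivalence class, there is a zero-cost coupling. -/
private lemma exists_zero_cost {r : X → X → Prop} (hr : Equivalence r) (μ ν : FinDist X)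
    (h : ∀ x : X, (∑ᶠ y ∈ {y | r y x}, μ.toFun y) = ∑ᶠ y ∈ {y | r y x}, ν.toFun y) :
    ∃ ω : FinDist (X × X), IsCoupling ω μ ν ∧
      (∑ᶠ p : X × X, ω.toFun p * (if r p.1 p.2 then (0:ℝ) else 1)) = 0 := by
  set m : X → ℝ := fun x => ∑ᶠ y ∈ {y | r y x}, μ.toFun y with hm
  set f : X × X → ℝ :=
    fun p => if r p.1 p.2 then μ.toFun p.1 * ν.toFun p.2 / m p.1 else 0 with hf
  have hm0 : ∀ x, 0 ≤ m x := fun x => FinDist.mem_nonneg μ _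
  have hmμ : ∀ x, μ.toFun x ≤ m x := fun x => FinDist.mem_le μ _ (hr.refl x)
  have hmν : ∀ x, ν.toFun x ≤ m x := fun x => by
    rw [hm]; dsimp only; rw [h x]; exact FinDist.mem_le ν _ (hr.refl x)
  have hclass : ∀ {x y : X}, r x y → {z | r z x} = {z | r z y} := by
    intro x y hxy
    ext z
    exact ⟨fun hz => hr.trans hz hxy, fun hz => hr.trans hz (hr.symm hxy)⟩
  have hmeq : ∀ {x y : X}, r x y → m x = m y := fun {x y} hxy => by
    rw [hm]; dsimp only; rw [hclass hxy]
  have hfnn : ∀ p, 0 ≤ f p := by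
    intro p
    rw [hf]
    dsimp only
    split_ifs
    · exact div_nonneg (mul_nonneg (μ.nonneg _) (ν.nonneg _)) (hm0 _)
    · exact le_refl 0
  have hsupp : Function.support f ⊆
      (Function.support μ.toFun) ×ˢ (Function.support ν.toFun) := by
    intro p hp
    rw [Function.mem_support, hf] at hp
    dsimp only at hp
    split_ifs at hp with hrp
    · have hnum : μ.toFun p.1 * ν.toFun p.2 ≠ 0 := fun h0 => hp (by rw [h0, zero_div])
      rw [mul_ne_zero_iff] at hnum
      exact ⟨hnum.1, hnum.2⟩
    · exact absurd rfl hp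
  have hfin : (Function.support f).Finite := (μ.finSupp.prod ν.finSupp).subset hsupp
  have hsymcl : ∀ x : X, {y | r x y} = {y | r y x} :=
    fun x => Set.ext fun y => ⟨fun hh => hr.symm hh, fun hh => hr.symm hh⟩
  -- first marginal
  have hmarg1 : ∀ x, ∑ᶠ y, f (x, y) = μ.toFun x := by
    intro x
    by_cases hx0 : μ.toFun x = 0
    · have hz : (fun y => f (x, y)) = fun _ => (0 : ℝ) := by
        funext y
        rw [hf]
        dsimp only
        split_ifs
        · rw [hx0, zero_mul, zero_div]
        · rfl
      rw [hz, finsum_zero, hx0]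
    · have hmx : m x ≠ 0 :=
        (lt_of_lt_of_le (lt_of_le_of_ne (μ.nonneg x) (Ne.symm hx0)) (hmμ x)).ne'
      have hind : (Function.support (Set.indicator {y | r x y} ν.toFun)).Finite :=
        ν.finSupp.subset (fun y hy => by
          rw [Function.mem_support, Set.indicator_apply] at hy
          split_ifs at hy
          · exact hy
          · exact absurd rfl hy)
      have heq : (fun y => f (x, y)) =
          fun y => (μ.toFun x / m x) * Set.indicator {y | r x y} ν.toFun y := by
        funext y
        rw [hf, Set.indicator_apply]
        simp only [Set.mem_setOf_eq]
        split_ifs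
        · rw [mul_div_right_comm]
        · rw [mul_zero]
      rw [heq, ← mul_finsum _ _, ← finsum_mem_def, hsymcl x, ← h x]
      have hmm : (∑ᶠ y ∈ {y | r y x}, μ.toFun y) = m x := rfl
      rw [hmm]
      exact div_mul_cancel₀ _ hmx
  -- second marginal
  have hmarg2 : ∀ y, ∑ᶠ x, f (x, y) = ν.toFun y := by
    intro y
    by_cases hy0 : ν.toFun y = 0
    · have hz : (fun x => f (x, y)) = fun _ => (0 : ℝ) := by
        funext x
        rw [hf]
        dsimp only
        split_ifs
        · rw [hy0, mul_zero, zero_div]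
        · rfl
      rw [hz, finsum_zero, hy0]
    · have hmy : m y ≠ 0 :=
        (lt_of_lt_of_le (lt_of_le_of_ne (ν.nonneg y) (Ne.symm hy0)) (hmν y)).ne'
      have hind : (Function.support (Set.indicator {x | r x y} μ.toFun)).Finite :=
        μ.finSupp.subset (fun x hx => by
          rw [Function.mem_support, Set.indicator_apply] at hx
          split_ifs at hx
          · exact hx
          · exact absurd rfl hx)
      have heq : (fun x => f (x, y)) =
          fun x => (ν.toFun y / m y) * Set.indicator {x | r x y} μ.toFun x := by
        funext x
        rw [hf, Set.indicator_apply]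
        simp only [Set.mem_setOf_eq]
        split_ifs with hxy
        · rw [hmeq hxy]
          ring
        · rw [mul_zero]
      rw [heq, ← mul_finsum _ _, ← finsum_mem_def]
      have hmm : (∑ᶠ x ∈ {x | r x y}, μ.toFun x) = m y := rfl
      rw [hmm]
      exact div_mul_cancel₀ _ hmy
  refine ⟨⟨f, hfnn, hfin, ?_⟩, ⟨hmarg1, hmarg2⟩, ?_⟩
  · -- sums to one
    have hsub : Function.support f ⊆ ↑(μ.finSupp.toFinset ×ˢ ν.finSupp.toFinset) := by
      intro p hp
      have := hsupp hp
      simp only [Finset.coe_product, Set.Finite.coe_toFinset]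
      exact this
    rw [finsum_eq_finset_sum_of_support_subset _ hsub, Finset.sum_product]
    have hin : ∀ x, ∑ y ∈ ν.finSupp.toFinset, f (x, y) = μ.toFun x := by
      intro x
      rw [← hmarg1 x]
      refine (finsum_eq_finset_sum_of_support_subset _ (fun y hy => ?_)).symm
      rw [Function.mem_support] at hy
      have : (x, y) ∈ Function.support f := hy
      rw [Set.Finite.coe_toFinset]
      exact (hsupp this).2
    rw [Finset.sum_congr rfl fun x _ => hin x, ← finsum_eq_sum _ μ.finSupp, μ.sum_one]
  · -- zero cost
    show (∑ᶠ p : X × X, f p * (if r p.1 p.2 then (0:ℝ) else 1)) = 0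
    have hz : (fun p : X × X => f p * (if r p.1 p.2 then (0:ℝ) else 1)) = fun _ => (0:ℝ) := by
      funext p
      rw [hf]
      dsimp only
      split_ifs
      · rw [mul_zero]
      · rw [zero_mul]
    rw [hz, finsum_zero]

end Aux

/-- For finitely supported probability distributions `μ, ν` over a set `X` with an
equivalence relation `≈`, the Kantorovich lifting of the pseudometric `d≈`
(`d≈(x,y) = 0` if `x ≈ y`, else `1`) is zero iff `μ` and `ν` assign the same total
probability to every `≈`-equivalence class. -/
theorem kantorovich_equiv_pseudometric_eq_zero_iff {X : Type*}
    (r : X → X → Prop) (hr : Equivalence r) (μ ν : FinDist X) :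
    kantorovich (fun x y => if r x y then (0 : ℝ) else 1) μ ν = 0 ↔
      ∀ x : X, (∑ᶠ y ∈ {y | r y x}, μ.toFun y) = ∑ᶠ y ∈ {y | r y x}, ν.toFun y := by
  set S : Set ℝ := { c | ∃ ω : FinDist (X × X), IsCoupling ω μ ν ∧
      c = ∑ᶠ p : X × X, ω.toFun p * (if r p.1 p.2 then (0:ℝ) else 1) } with hS
  have hSne : S.Nonempty := by
    obtain ⟨ω, hω⟩ := exists_coupling μ ν
    exact ⟨_, ω, hω, rfl⟩
  have hSlb : ∀ a ∈ S, (0:ℝ) ≤ a := by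
    rintro a ⟨ω, -, rfl⟩
    apply finsum_nonneg
    intro p
    apply mul_nonneg (ω.nonneg p)
    split_ifs
    · exact le_refl 0
    · exact zero_le_one
  show sInf S = 0 ↔ _
  constructor
  · intro h0 x0
    by_contra hne
    have hδ : 0 < |(∑ᶠ y ∈ {y | r y x0}, μ.toFun y) - ∑ᶠ y ∈ {y | r y x0}, ν.toFun y| :=
      abs_pos.2 (sub_ne_zero.2 hne)
    obtain ⟨a, haS, hlt⟩ := Real.lt_sInf_add_pos hSne hδ
    rw [h0, zero_add] at hlt
    obtain ⟨ω, hω, rfl⟩ := haS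
    exact absurd hlt (not_lt.2 (coupling_cost_bound hr hω x0))
  · intro h
    obtain ⟨ω, hω, hcost⟩ := exists_zero_cost hr μ ν h
    refine le_antisymm (csInf_le ⟨0, fun a ha => hSlb a ha⟩ ⟨ω, hω, hcost.symm⟩)
      (le_csInf hSne hSlb)
end

section
/- If two finitely supported probability distributions μ₁, μ₂ over traces (Act*) agree on the cumulative probability of every trace prefix — i.e., for all α ∈ Act*, Σ_{β : α is a prefix of β} μ₁(β) = Σ_{β : α is a prefix of β} μ₂(β) — then μ₁ = μ₂. -/
/-- If two finitely supported probability distributions over traces agree on the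
cumulative probability of every trace prefix — for all `α`,
`Σ_{β : α prefix of β} μ₁(β) = Σ_{β : α prefix of β} μ₂(β)` — then they are equal. -/
theorem finDist_eq_of_prefix_cumulative_eq {Act : Type*}
    (μ₁ μ₂ : FinDist (List Act))
    (h : ∀ α : List Act,
      (∑ᶠ β ∈ {β : List Act | α <+: β}, μ₁.toFun β)
        = ∑ᶠ β ∈ {β : List Act | α <+: β}, μ₂.toFun β) :
    μ₁ = μ₂ := by
  classical
  have hfin : (Function.support μ₁.toFun ∪ Function.support μ₂.toFun).Finite :=
    μ₁.finSupp.union μ₂.finSupp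
  set T : Finset (List Act) := hfin.toFinset with hT
  set E : List Act → Finset (List Act) :=
    fun α => T.filter (fun β => α <+: β ∧ β ≠ α) with hE
  have key : ∀ (μ : FinDist (List Act)), Function.support μ.toFun ⊆ ↑T →
      ∀ α, (∑ᶠ β ∈ {β : List Act | α <+: β}, μ.toFun β)
        = μ.toFun α + ∑ β ∈ E α, μ.toFun β := by
    intro μ hsupp α
    have hα : α ∉ E α := by simp [hE]
    rw [finsum_mem_eq_sum_of_inter_support_eq μ.toFun
      (t := insert α (E α)) ?_, Finset.sum_insert hα]
    ext β
    simp only [Set.mem_inter_iff, Set.mem_setOf_eq, Function.mem_support,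
      Finset.coe_insert, Set.mem_insert_iff, Finset.mem_coe, hE,
      Finset.mem_filter]
    constructor
    · rintro ⟨hpre, hne⟩
      refine ⟨?_, hne⟩
      by_cases hβα : β = α
      · exact Or.inl hβα
      · exact Or.inr ⟨hsupp hne, hpre, hβα⟩
    · rintro ⟨hmem, hne⟩
      refine ⟨?_, hne⟩
      rcases hmem with rfl | ⟨_, hpre, _⟩
      · exact List.prefix_refl _
      · exact hpre
  have hsupp₁ : Function.support μ₁.toFun ⊆ ↑T := by
    intro x hx; simp [hT, Set.Finite.mem_toFinset]; exact Or.inl hx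
  have hsupp₂ : Function.support μ₂.toFun ⊆ ↑T := by
    intro x hx; simp [hT, Set.Finite.mem_toFinset]; exact Or.inr hx
  have main : ∀ n : ℕ, ∀ α : List Act, (E α).card = n → μ₁.toFun α = μ₂.toFun α := by
    intro n
    induction n using Nat.strong_induction_on with
    | _ n ih =>
      intro α hcard
      have h1 := key μ₁ hsupp₁ α
      have h2 := key μ₂ hsupp₂ α
      have hsum : ∑ β ∈ E α, μ₁.toFun β = ∑ β ∈ E α, μ₂.toFun β := by
        refine Finset.sum_congr rfl (fun β hβ => ?_)
        have hβ' : α <+: β ∧ β ≠ α := by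
          simpa [hE] using (Finset.mem_filter.mp hβ).2
        have hsub : E β ⊆ (E α).erase β := by
          intro γ hγ
          have hγ' := Finset.mem_filter.mp hγ
          refine Finset.mem_erase.mpr ⟨fun hc => hγ'.2.2 hc, ?_⟩
          refine Finset.mem_filter.mpr ⟨hγ'.1, hβ'.1.trans hγ'.2.1, ?_⟩
          rintro rfl
          exact hβ'.2 (antisymm hγ'.2.1 hβ'.1)
        have hlt : (E β).card < n := by
          have h1 : (E β).card ≤ ((E α).erase β).card := Finset.card_le_card hsub
          have h2 : ((E α).erase β).card < (E α).card :=
            Finset.card_erase_lt_of_mem hβ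
          omega
        exact ih _ hlt β rfl
      have := h α
      rw [h1, h2, hsum] at this
      linarith
  have hfun : μ₁.toFun = μ₂.toFun := funext (fun α => main _ α rfl)
  cases μ₁; cases μ₂
  simp_all
end
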